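/- Let θ be a partial action of an inverse semigroupoid S on a set X. Then θ is a global action (X_s = X_{ss*} for all s) if and only if θ_{st} = θ_s ∘ θ_t exactly (equal domains) for every composable pair (s,t). -/

import Mathlib

/-!
If `θ` is global, (P3) gives `θ_t⁻¹(X_t ∩ X_{s*}) = X_{(st)*} ∩ X_{t*}`, so it suffices that
`X_{(st)*} ⊆ X_{t*}`. Globality turns this into `X_e ⊆ X_f` for the idempotents
`e = (st)*(st)` and `f = t*t`; since `ef = e`, also `fe = e`, and (P3) for the pair `(f, e)`
gives the inclusion. Conversely, equal domains for the pair `(s, s*)` say that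
`θ_{s*}⁻¹(X_{s*} ∩ X_{s*}) = X_{ss*}`, whence `X_{ss*} ⊆ X_s`.
-/

structure InvSgpd (S : Type*) (O : Type*) where
  d : S → O
  c : S → O
  mul : S → S → S
  d_mul : ∀ s t, d s = c t → d (mul s t) = d t
  c_mul : ∀ s t, d s = c t → c (mul s t) = c s
  assoc : ∀ p s t, d p = c s → d s = c t → mul (mul p s) t = mul p (mul s t)
  inv : S → S
  comp_inv : ∀ s, d s = c (inv s)
  inv_comp : ∀ s, d (inv s) = c s
  mul_inv_mul : ∀ s, mul (mul s (inv s)) s = s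
  inv_mul_inv : ∀ s, mul (mul (inv s) s) (inv s) = inv s
  inv_unique : ∀ s t, d s = c t → d t = c s →
    mul (mul s t) s = s → mul (mul t s) t = t → t = inv s

namespace InvSgpd
variable {S O : Type*} (G : InvSgpd S O)
def Composable (s t : S) : Prop := G.d s = G.c t
def Idem (e : S) : Prop := G.Composable e e ∧ G.mul e e = e
def le (s t : S) : Prop :=
  G.d s = G.d t ∧ G.c s = G.c t ∧ s = G.mul t (G.mul (G.inv s) s)
end InvSgpd

/-- A partial action of an inverse semigroupoid `G` on a set (type) `X`:
`dom s` plays the role of `X_s` and `act s` the role of `θ_s : X_{s*} → X_s`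
(as a total map whose values are only relevant on `dom (G.inv s)`). -/
structure PAction {S O : Type*} (G : InvSgpd S O) (X : Type*) where
  dom : S → Set X
  act : S → X → X
  maps : ∀ s, ∀ x ∈ dom (G.inv s), act s x ∈ dom s
  /-- (P1) `θ_e = id_{X_e}` for idempotents. -/
  idem_id : ∀ e, G.Idem e → ∀ x ∈ dom e, act e x = x
  /-- (P1) every point lies in some `X_e` with `e` idempotent. -/
  cover : ∀ x : X, ∃ e, G.Idem e ∧ x ∈ dom e
  /-- (P2) `X_s ⊆ X_{ss*}`. -/
  dom_mono : ∀ s, dom s ⊆ dom (G.mul s (G.inv s))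
  /-- (P3) `θ_t⁻¹(X_t ∩ X_{s*}) = X_{(st)*} ∩ X_{t*}` for composable `(s,t)`. -/
  preimage_eq : ∀ s t, G.Composable s t →
    {x | x ∈ dom (G.inv t) ∧ act t x ∈ dom t ∩ dom (G.inv s)}
      = dom (G.inv (G.mul s t)) ∩ dom (G.inv t)
  /-- (P3) `θ_s (θ_t x) = θ_{st} x` on `X_{(st)*} ∩ X_{t*}`. -/
  mul_act : ∀ s t, G.Composable s t →
    ∀ x ∈ dom (G.inv (G.mul s t)) ∩ dom (G.inv t),
      act s (act t x) = act (G.mul s t) x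

namespace PAction
variable {S O X : Type*} {G : InvSgpd S O}

/-- A partial action is global when `X_s = X_{ss*}` for every `s`. -/
def IsGlobal (θ : PAction G X) : Prop := ∀ s, θ.dom s = θ.dom (G.mul s (G.inv s))

end PAction

namespace InvSgpd
variable {S O : Type*} {G : InvSgpd S O}

theorem inv_inv (s : S) : G.inv (G.inv s) = s :=
  (G.inv_unique _ _ (G.inv_comp s) (G.comp_inv s) (G.inv_mul_inv s) (G.mul_inv_mul s)).symm

theorem Idem.inv_eq {e : S} (he : G.Idem e) : G.inv e = e :=
  (G.inv_unique e e he.1 he.1 (by rw [he.2, he.2]) (by rw [he.2, he.2])).symm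

theorem d_inv_mul_self (s : S) : G.d (G.mul (G.inv s) s) = G.d s :=
  G.d_mul _ _ (G.inv_comp s)

theorem c_inv_mul_self (s : S) : G.c (G.mul (G.inv s) s) = G.d s :=
  (G.c_mul _ _ (G.inv_comp s)).trans (G.comp_inv s).symm

theorem idem_inv_mul_self (s : S) : G.Idem (G.mul (G.inv s) s) := by
  refine ⟨(d_inv_mul_self s).trans (c_inv_mul_self s).symm, ?_⟩
  rw [← G.assoc _ _ _ ((d_inv_mul_self s).trans (G.comp_inv s)) (G.inv_comp s), G.inv_mul_inv]

theorem idem_mul_inv_self (s : S) : G.Idem (G.mul s (G.inv s)) := by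
  simpa only [inv_inv] using idem_inv_mul_self (G := G) (G.inv s)

/-- `fe` is an inverse of `e` as soon as `ef = e`; this avoids commutation of idempotents. -/
theorem Idem.mul_eq_of_mul_eq {e f : S} (he : G.Idem e) (hf : G.Idem f)
    (hef : G.Composable e f) (h : G.mul e f = e) : G.mul f e = e := by
  have hfe : G.Composable f e := hf.1.trans (hef.symm.trans he.1)
  have hefe : G.mul e (G.mul f e) = e := by
    rw [← G.assoc e f e hef hfe, h, he.2]
  have hfee : G.mul (G.mul f e) e = G.mul f e := by
    rw [G.assoc f e e hfe he.1, he.2]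
  have hinv : G.mul f e = G.inv e := by
    refine G.inv_unique e _ (hef.trans (G.c_mul f e hfe).symm)
      ((G.d_mul f e hfe).trans he.1) (by rw [hefe, he.2]) ?_
    rw [hfee, G.assoc f e _ hfe (hef.trans (G.c_mul f e hfe).symm), hefe]
  rw [hinv, he.inv_eq]

theorem mul_mul_inv_mul_self {s t : S} (hst : G.Composable s t) :
    G.mul (G.mul s t) (G.mul (G.inv t) t) = G.mul s t := by
  rw [G.assoc s t _ hst (c_inv_mul_self t).symm, ← G.assoc t _ t (G.comp_inv t) (G.inv_comp t),
    G.mul_inv_mul]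

end InvSgpd

namespace PAction
variable {S O X : Type*} {G : InvSgpd S O}

open InvSgpd

/-- Since `θ_e` is the identity on `X_e`, axiom (P3) for the pair `(f, e)` reads
`X_e ∩ X_f = X_{(fe)*} ∩ X_e`. -/
theorem dom_subset_of_mul_eq (θ : PAction G X) {e f : S} (he : G.Idem e) (hf : G.Idem f)
    (hfe : G.Composable f e) (h : G.mul f e = e) : θ.dom e ⊆ θ.dom f := by
  have key := θ.preimage_eq f e hfe
  rw [h, he.inv_eq, hf.inv_eq, Set.inter_self] at key
  intro x hx
  rw [← key] at hx
  simpa only [θ.idem_id e he x hx.1] using hx.2.2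

theorem IsGlobal.dom_inv_eq {θ : PAction G X} (hθ : θ.IsGlobal) (s : S) :
    θ.dom (G.inv s) = θ.dom (G.mul (G.inv s) s) := by
  simpa only [inv_inv] using hθ (G.inv s)

theorem IsGlobal.dom_inv_mul_subset {θ : PAction G X} (hθ : θ.IsGlobal) {s t : S}
    (hst : G.Composable s t) : θ.dom (G.inv (G.mul s t)) ⊆ θ.dom (G.inv t) := by
  set u := G.mul s t
  have hu : G.d u = G.d t := G.d_mul s t hst
  have hef : G.Composable (G.mul (G.inv u) u) (G.mul (G.inv t) t) :=
    ((d_inv_mul_self u).trans hu).trans (c_inv_mul_self t).symm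
  have hfe : G.Composable (G.mul (G.inv t) t) (G.mul (G.inv u) u) :=
    (d_inv_mul_self t).trans (hu.symm.trans (c_inv_mul_self u).symm)
  have hmul : G.mul (G.mul (G.inv u) u) (G.mul (G.inv t) t) = G.mul (G.inv u) u := by
    rw [G.assoc _ _ _ (G.inv_comp u) (hu.trans (c_inv_mul_self t).symm), mul_mul_inv_mul_self hst]
  rw [hθ.dom_inv_eq, hθ.dom_inv_eq t]
  exact θ.dom_subset_of_mul_eq (idem_inv_mul_self u) (idem_inv_mul_self t) hfe
    ((idem_inv_mul_self u).mul_eq_of_mul_eq (idem_inv_mul_self t) hef hmul)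

end PAction

/-- A partial action is global iff `θ_{st} = θ_s ∘ θ_t` with equal domains
for every composable pair `(s,t)`. -/
theorem isGlobal_iff {S O X : Type*} (G : InvSgpd S O) (θ : PAction G X) :
    θ.IsGlobal ↔
      ∀ s t, G.Composable s t →
        {x | x ∈ θ.dom (G.inv t) ∧ θ.act t x ∈ θ.dom t ∩ θ.dom (G.inv s)}
          = θ.dom (G.inv (G.mul s t)) := by
  constructor
  · intro hθ s t hst
    rw [θ.preimage_eq s t hst, Set.inter_eq_left]
    exact hθ.dom_inv_mul_subset hst
  · intro h s
    refine (θ.dom_mono s).antisymm fun x hx => ?_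
    have hs := h s (G.inv s) (G.comp_inv s)
    rw [InvSgpd.inv_inv, (InvSgpd.idem_mul_inv_self s).inv_eq] at hs
    rw [← hs] at hx
    exact hx.1
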